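/- Let d, N ≥ 1, σ > 0, ρ > 0. Let V₀ : ℝ^d → ℝ be smooth with e^{-V₀/σ} ∈ L¹(ℝ^d) and V₀(x) → ∞ as |x| → ∞, and let V₁ : ℝ^d × (ℝ^d)^N → ℝ be smooth, bounded, and ℤ^d-periodic in each of its last N arguments; set osc(V₁) = sup V₁ − inf V₁. Let π_ref ∝ e^{-V₀/σ} and π⁰ ∝ Z(x) = ∫_{([0,1]^d)^N} e^{-(V₀(x)+V₁(x,y₁,…,y_N))/σ} dy₁⋯dy_N be probability densities on ℝ^d, and for x ∈ ℝ^d, e ∈ ℝ^d define the effective quadratic form m(x, e) = (∫ e^{-V₁(x,y)/σ} dy)^{-1} · inf { ∫_{([0,1]^d)^N} |e + ∇v₁(y₁) + ⋯ + ∇v_N(y_N)|² e^{-V₁(x,y₁,…,y_N)/σ} dy : v₁,…,v_N : ℝ^d → ℝ C¹ and ℤ^d-periodic }. Assume Var_{π_ref}(f) ≤ (σ/ρ) ∫ |∇f|² dπ_ref for all f ∈ C_c^∞(ℝ^d). Then for all f ∈ C_c^∞(ℝ^d), Var_{π⁰}(f) ≤ (σ/ρ) e^{3·osc(V₁)/σ}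 ∫_{ℝ^d} m(x, ∇f(x)) π⁰(x) dx. -/

import Mathlib

open MeasureTheory Filter

/-- Variance of `f` with respect to the probability density `p` on `ℝ^d`. -/
noncomputable def varDensity {d : ℕ} (p f : (Fin d → ℝ) → ℝ) : ℝ :=
  (∫ x, f x ^ 2 * p x) - (∫ x, f x * p x) ^ 2

/-- Euclidean gradient of `f : ℝ^d → ℝ` as a vector of partial derivatives. -/
noncomputable def grad {d : ℕ} (f : (Fin d → ℝ) → ℝ) (x : Fin d → ℝ) : Fin d → ℝ :=
  fun i => fderiv ℝ f x (Pi.single i 1)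

/-- `f : ℝ^d → ℝ` is `ℤ^d`-periodic. -/
def ZdPeriodic {d : ℕ} (f : (Fin d → ℝ) → ℝ) : Prop :=
  ∀ (x : Fin d → ℝ) (k : Fin d → ℤ), f (x + fun i => (k i : ℝ)) = f x

/-- The effective quadratic form `m(x,e)` of the homogenized diffusion tensor:
`m(x,e) = (∫ e^{-V₁(x,y)/σ} dy)⁻¹ · inf { ∫ |e + ∇v₁(y₁)+⋯+∇v_N(y_N)|² e^{-V₁(x,y)/σ} dy }`,
the infimum over `C¹` `ℤ^d`-periodic `v₁,…,v_N`. -/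
noncomputable def mEff (d N : ℕ) (σ : ℝ) (V₁ : (Fin d → ℝ) → (Fin N → Fin d → ℝ) → ℝ)
    (x : Fin d → ℝ) (e : Fin d → ℝ) : ℝ :=
  (∫ y in Set.Icc (0 : Fin N → Fin d → ℝ) 1, Real.exp (-V₁ x y / σ))⁻¹ *
    sInf { r : ℝ | ∃ v : Fin N → (Fin d → ℝ) → ℝ,
      (∀ i, ContDiff ℝ 1 (v i)) ∧ (∀ i, ZdPeriodic (v i)) ∧
      r = ∫ y in Set.Icc (0 : Fin N → Fin d → ℝ) 1,
            (∑ j, (e j + ∑ i, grad (v i) (y i) j) ^ 2) * Real.exp (-V₁ x y / σ) }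


set_option linter.unusedSectionVars false
set_option linter.unusedVariables false
set_option maxHeartbeats 1000000

section MeasureHelpers

variable {ι : Type*} [Fintype ι] [DecidableEq ι] {α : ι → Type*} [∀ i, MeasurableSpace (α i)]

lemma pi_restrict_eq (μ : ∀ i, Measure (α i)) [∀ i, SigmaFinite (μ i)]
    (s : ∀ i, Set (α i)) (hs : ∀ i, MeasurableSet (s i)) :
    Measure.pi (fun i => (μ i).restrict (s i)) = (Measure.pi μ).restrict (Set.univ.pi s) := by
  refine Measure.pi_eq fun t ht => ?_
  rw [Measure.restrict_apply (MeasurableSet.univ_pi ht), ← Set.pi_inter_distrib,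
    Measure.pi_pi]
  exact Finset.prod_congr rfl fun i _ => (Measure.restrict_apply (ht i)).symm

lemma measurePreserving_eval' (μ : ∀ i, Measure (α i)) [∀ i, IsProbabilityMeasure (μ i)]
    (i : ι) : MeasurePreserving (Function.eval i) (Measure.pi μ) (μ i) := by
  refine ⟨measurable_pi_apply i, ?_⟩
  ext t ht
  rw [Measure.map_apply (measurable_pi_apply i) ht]
  have hpre : Function.eval i ⁻¹' t
      = Set.univ.pi (Function.update (fun j => (Set.univ : Set (α j))) i t) := by
    ext y
    simp only [Set.mem_preimage, Set.mem_univ_pi, Function.update_apply]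
    constructor
    · intro h j
      by_cases hj : j = i
      · subst hj; simpa using h
      · simp [hj]
    · intro h
      have := h i
      simpa using this
  rw [hpre, Measure.pi_pi]
  rw [Finset.prod_eq_single i (fun j _ hj => by simp [Function.update_apply, hj])
    (by simp)]
  simp

end MeasureHelpers

section Cube

lemma volume_cube (n : ℕ) : (volume (Set.Icc (0 : Fin n → ℝ) 1) : ENNReal) = 1 := by
  rw [Real.volume_Icc_pi]
  simp

lemma volume_cellY (d N : ℕ) : volume (Set.Icc (0 : Fin N → Fin d → ℝ) 1) = 1 := by
  rw [← Set.pi_univ_Icc, MeasureTheory.volume_pi_pi]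
  simp [volume_cube d]

instance cube_prob (n : ℕ) :
    IsProbabilityMeasure (volume.restrict (Set.Icc (0 : Fin n → ℝ) 1)) :=
  ⟨by rw [Measure.restrict_apply_univ]; exact volume_cube n⟩

instance cellY_prob (d N : ℕ) :
    IsProbabilityMeasure (volume.restrict (Set.Icc (0 : Fin N → Fin d → ℝ) 1)) :=
  ⟨by rw [Measure.restrict_apply_univ]; exact volume_cellY d N⟩

end Cube


lemma continuous_parint {X α : Type*} [TopologicalSpace X] [LocallyCompactSpace X]
    [FirstCountableTopology X]
    [MeasurableSpace α] [TopologicalSpace α] [OpensMeasurableSpace α]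
    (μ : Measure α) [IsFiniteMeasure μ] {s : Set α} (hs : IsCompact s)
    (hsupp : ∀ᵐ y ∂μ, y ∈ s) (g : X → α → ℝ)
    (hg : Continuous fun p : X × α => g p.1 p.2) :
    Continuous fun x => ∫ y, g x y ∂μ := by
  rw [continuous_iff_continuousAt]
  intro x₀
  obtain ⟨K, hKc, hKx⟩ := exists_compact_mem_nhds x₀
  obtain ⟨C, hC⟩ := (hKc.prod hs).exists_bound_of_continuousOn hg.continuousOn
  refine continuousAt_of_dominated ?_ ?_ (integrable_const C) ?_
  · exact Eventually.of_forall fun x =>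
      (hg.comp (Continuous.prodMk_right x)).aestronglyMeasurable
  · filter_upwards [hKx] with x hx
    filter_upwards [hsupp] with y hy
    exact hC (x, y) ⟨hx, hy⟩
  · exact ae_of_all _ fun y =>
      (hg.comp (continuous_id.prodMk continuous_const)).continuousAt

lemma sq_integral_le {α : Type*} [MeasurableSpace α] (μ : Measure α)
    [IsProbabilityMeasure μ] {h : α → ℝ} (h1 : Integrable h μ)
    (h2 : Integrable (fun a => h a ^ 2) μ) :
    (∫ a, h a ∂μ) ^ 2 ≤ ∫ a, h a ^ 2 ∂μ := by
  set c := ∫ a, h a ∂μ with hc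
  have hexp : ∀ a, (h a - c) ^ 2 = h a ^ 2 - (2 * c) * h a + c ^ 2 := by intro a; ring
  have i1 : Integrable (fun a => h a ^ 2 - (2 * c) * h a) μ := by
    exact h2.sub (h1.const_mul _)
  have hint : ∫ a, (h a - c) ^ 2 ∂μ = (∫ a, h a ^ 2 ∂μ) - (2 * c) * c + c ^ 2 := by
    rw [show (fun a => (h a - c) ^ 2) = fun a => (h a ^ 2 - (2 * c) * h a) + c ^ 2 from
      funext fun a => by ring]
    rw [integral_add i1 (integrable_const _),
      integral_sub h2 (by exact h1.const_mul _), MeasureTheory.integral_const_mul, integral_const]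
    simp
    exact Or.inl hc.symm
  have hnn : 0 ≤ ∫ a, (h a - c) ^ 2 ∂μ := integral_nonneg fun a => sq_nonneg _
  nlinarith [hnn, hint]

section ZeroMean

variable {d : ℕ}

lemma periodic_shift (v : (Fin d → ℝ) → ℝ) (hper : ZdPeriodic v) (b : Fin d → ℝ)
    (j : Fin d) : v (b + Pi.single j 1) = v b := by
  have := hper b (Pi.single j 1)
  have hcast : (fun i => ((Pi.single j (1 : ℤ) : Fin d → ℤ) i : ℝ)) = Pi.single j (1 : ℝ) := by
    funext i
    by_cases h : i = j
    · subst h; simp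
    · simp [Pi.single_apply, h]
  rwa [hcast] at this

/-- The integral of a partial derivative of a `C¹` `ℤ^d`-periodic function over the
unit cube vanishes. -/
lemma integral_grad_periodic (v : (Fin d → ℝ) → ℝ) (hv : ContDiff ℝ 1 v)
    (hper : ZdPeriodic v) (j : Fin d) :
    ∫ z in Set.Icc (0 : Fin d → ℝ) 1, fderiv ℝ v z (Pi.single j 1) = 0 := by
  classical
  set F : (Fin d → ℝ) → ℝ := fun z => fderiv ℝ v z (Pi.single j 1) with hF
  have hFcont : Continuous F :=
    (hv.continuous_fderiv one_ne_zero).clm_apply continuous_const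
  -- rewrite the restricted volume as a product of 1-dimensional restricted measures
  set ν : Measure ℝ := volume.restrict (Set.Icc (0 : ℝ) 1) with hν
  haveI : IsProbabilityMeasure ν := ⟨by rw [Measure.restrict_apply_univ]; simp⟩
  have hcube : (volume : Measure (Fin d → ℝ)).restrict (Set.Icc 0 1)
      = Measure.pi (fun _ : Fin d => ν) := by
    rw [hν, pi_restrict_eq (fun _ : Fin d => volume) (fun _ => Set.Icc (0:ℝ) 1)
      (fun _ => measurableSet_Icc)]
    rw [← MeasureTheory.volume_pi]
    congr 1
    exact (Set.pi_univ_Icc (0 : Fin d → ℝ) 1).symm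
  have hint : Integrable F ((volume : Measure (Fin d → ℝ)).restrict (Set.Icc 0 1)) :=
    hFcont.continuousOn.integrableOn_compact isCompact_Icc
  rw [hcube] at hint ⊢
  set e := MeasurableEquiv.piEquivPiSubtypeProd (fun _ : Fin d => ℝ) (fun i => i = j)
    with he
  have hmp := measurePreserving_piEquivPiSubtypeProd (fun _ : Fin d => ν) (fun i => i = j)
  have h1 := hmp.integral_comp e.measurableEmbedding (fun p => F (e.symm p))
  simp only [he, MeasurableEquiv.symm_apply_apply] at h1
  have hcomp : (fun p => F (e.symm p)) ∘ e = F := funext fun x => by simp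
  have hint2 := (hmp.integrable_comp_emb e.measurableEmbedding
    (g := fun p => F (e.symm p))).mp (by rw [hcomp]; exact hint)
  rw [h1]
  rw [integral_prod_symm _ hint2]
  -- now show each inner integral vanishes
  letI instF : Fintype {i : Fin d // i = j} := Subtype.fintype _
  have hinner : ∀ w : {i : Fin d // ¬i = j} → ℝ,
      (∫ a, F (e.symm (a, w)) ∂(Measure.pi fun _ : {i : Fin d // i = j} => ν)) = 0 := by
    intro w
    set s : Fin d → ℝ := Pi.single j 1 with hs
    set ψ0 : Fin d → ℝ := e.symm ((fun _ => 0), w) with hψ0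
    have hrep : ∀ a : {i : Fin d // i = j} → ℝ,
        e.symm (a, w) = ψ0 + (a ⟨j, rfl⟩) • s := by
      intro a
      funext i
      by_cases hij : i = j
      · subst hij
        have ha : ∀ u : {i' : Fin d // i' = i}, a u = a ⟨i, rfl⟩ := by
          rintro ⟨u, rfl⟩; rfl
        simp [hψ0, hs, he, MeasurableEquiv.piEquivPiSubtypeProd, ha]
      · simp [hψ0, hs, he, MeasurableEquiv.piEquivPiSubtypeProd, hij, Pi.single_apply]
    simp only [hrep]
    have hcont2 : Continuous fun t : ℝ => F (ψ0 + t • s) :=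
      hFcont.comp (continuous_const.add (continuous_id.smul continuous_const))
    have heval := measurePreserving_eval' (fun _ : {i : Fin d // i = j} => ν) ⟨j, rfl⟩
    have hmapint : ∫ t, F (ψ0 + t • s)
          ∂(Measure.map (Function.eval (⟨j, rfl⟩ : {i : Fin d // i = j}))
            (Measure.pi fun _ : {i : Fin d // i = j} => ν))
        = ∫ a, F (ψ0 + (a ⟨j, rfl⟩) • s) ∂(Measure.pi fun _ : {i : Fin d // i = j} => ν) :=
      integral_map heval.measurable.aemeasurable hcont2.aestronglyMeasurable
    rw [heval.map_eq] at hmapint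
    rw [← hmapint]
    have hderiv : ∀ t ∈ Set.uIcc (0:ℝ) 1,
        HasDerivAt (fun t : ℝ => v (ψ0 + t • s)) (F (ψ0 + t • s)) t := by
      intro t _
      have hline : HasDerivAt (fun t : ℝ => ψ0 + t • s) s t := by
        simpa using ((hasDerivAt_id t).smul_const s).const_add ψ0
      simpa [hF, hs, Function.comp_def] using
        ((hv.differentiable one_ne_zero) (ψ0 + t • s)).hasFDerivAt.comp_hasDerivAt t hline
    have hftc : ∫ t in (0:ℝ)..1, F (ψ0 + t • s)
        = v (ψ0 + (1:ℝ) • s) - v (ψ0 + (0:ℝ) • s) :=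
      intervalIntegral.integral_eq_sub_of_hasDerivAt hderiv (hcont2.intervalIntegrable _ _)
    have hν2 : ∫ t, F (ψ0 + t • s) ∂ν = ∫ t in (0:ℝ)..1, F (ψ0 + t • s) := by
      rw [hν, intervalIntegral.integral_of_le (zero_le_one), ← integral_Icc_eq_integral_Ioc]
    rw [hν2, hftc]
    have hper1 : v (ψ0 + (1:ℝ) • s) = v ψ0 := by
      rw [one_smul, hs]
      exact periodic_shift v hper ψ0 j
    rw [hper1]
    simp
  exact integral_eq_zero_of_ae (Eventually.of_forall fun w => by simpa using hinner w)

end ZeroMean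

section YLevel

variable {d N : ℕ}

lemma cellY_restrict :
    (volume : Measure (Fin N → Fin d → ℝ)).restrict (Set.Icc 0 1)
      = Measure.pi (fun _ : Fin N => volume.restrict (Set.Icc (0 : Fin d → ℝ) 1)) := by
  rw [pi_restrict_eq (fun _ : Fin N => volume) (fun _ => Set.Icc (0 : Fin d → ℝ) 1)
    (fun _ => measurableSet_Icc), ← MeasureTheory.volume_pi]
  congr 1
  exact (Set.pi_univ_Icc (0 : Fin N → Fin d → ℝ) 1).symm

/-- The integral over the `N`-fold cell of a partial derivative of a periodic function of
one block of coordinates vanishes. -/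
lemma integral_gradY (i : Fin N) (v : (Fin d → ℝ) → ℝ) (hv : ContDiff ℝ 1 v)
    (hper : ZdPeriodic v) (j : Fin d) :
    ∫ y in Set.Icc (0 : Fin N → Fin d → ℝ) 1, grad v (y i) j = 0 := by
  rw [cellY_restrict]
  have hGcont : Continuous fun z : Fin d → ℝ => grad v z j :=
    (hv.continuous_fderiv one_ne_zero).clm_apply continuous_const
  have heval := measurePreserving_eval'
    (fun _ : Fin N => volume.restrict (Set.Icc (0 : Fin d → ℝ) 1)) i
  have hmap : ∫ z, grad v z j
        ∂(Measure.map (Function.eval i)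
          (Measure.pi fun _ : Fin N => volume.restrict (Set.Icc (0 : Fin d → ℝ) 1)))
      = ∫ y, grad v (y i) j
          ∂(Measure.pi fun _ : Fin N => volume.restrict (Set.Icc (0 : Fin d → ℝ) 1)) :=
    integral_map heval.measurable.aemeasurable hGcont.aestronglyMeasurable
  rw [heval.map_eq] at hmap
  rw [← hmap]
  exact integral_grad_periodic v hv hper j

variable (σ : ℝ) (V₁ : (Fin d → ℝ) → (Fin N → Fin d → ℝ) → ℝ)

/-- Lower bound for the Dirichlet energy of any admissible corrector. -/
lemma key_lb (hσ : 0 < σ)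
    (hV₁cont : Continuous fun p : (Fin d → ℝ) × (Fin N → Fin d → ℝ) => V₁ p.1 p.2)
    (S : ℝ) (hS : ∀ x y, V₁ x y ≤ S) (x : Fin d → ℝ) (e : Fin d → ℝ)
    (v : Fin N → (Fin d → ℝ) → ℝ) (hv : ∀ i, ContDiff ℝ 1 (v i))
    (hper : ∀ i, ZdPeriodic (v i)) :
    Real.exp (-S / σ) * ∑ j, e j ^ 2 ≤
      ∫ y in Set.Icc (0 : Fin N → Fin d → ℝ) 1,
        (∑ j, (e j + ∑ i, grad (v i) (y i) j) ^ 2) * Real.exp (-V₁ x y / σ) := by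
  classical
  set cellY : Set (Fin N → Fin d → ℝ) := Set.Icc 0 1 with hcellY
  have hcellYc : IsCompact cellY := isCompact_Icc
  have hgradc : ∀ (i : Fin N) (j : Fin d),
      Continuous fun y : Fin N → Fin d → ℝ => grad (v i) (y i) j := fun i j =>
    (((hv i).continuous_fderiv one_ne_zero).clm_apply continuous_const).comp
      (continuous_apply i)
  have hGcont : ∀ j : Fin d,
      Continuous fun y : Fin N → Fin d → ℝ => e j + ∑ i, grad (v i) (y i) j := fun j =>
    continuous_const.add (continuous_finset_sum _ fun i _ => hgradc i j)
  have hGint : ∀ j, IntegrableOn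
      (fun y : Fin N → Fin d → ℝ => e j + ∑ i, grad (v i) (y i) j) cellY volume := fun j =>
    (hGcont j).continuousOn.integrableOn_compact hcellYc
  have hGsqint : ∀ j, IntegrableOn
      (fun y : Fin N → Fin d → ℝ => (e j + ∑ i, grad (v i) (y i) j) ^ 2) cellY volume :=
    fun j => ((hGcont j).pow 2).continuousOn.integrableOn_compact hcellYc
  -- mean is e j
  have hmean : ∀ j, ∫ y in cellY, (e j + ∑ i, grad (v i) (y i) j) = e j := by
    intro j
    have hin1 : IntegrableOn (fun _ : Fin N → Fin d → ℝ => e j) cellY volume :=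
      integrableOn_const (by rw [hcellY, volume_cellY]; exact ENNReal.one_ne_top)
    have hin2 : IntegrableOn
        (fun y : Fin N → Fin d → ℝ => ∑ i, grad (v i) (y i) j) cellY volume :=
      (continuous_finset_sum _ fun i _ => hgradc i j).continuousOn.integrableOn_compact
        hcellYc
    rw [integral_add hin1 hin2, setIntegral_const,
      integral_finset_sum _ (fun i _ =>
        (hgradc i j).continuousOn.integrableOn_compact hcellYc)]
    have hz : ∀ i ∈ Finset.univ, (∫ y in cellY, grad (v i) (y i) j) = 0 := fun i _ =>
      integral_gradY i (v i) (hv i) (hper i) j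
    rw [Finset.sum_congr rfl hz]
    simp [hcellY, measureReal_def, volume_cellY]
  -- Cauchy-Schwarz on the probability measure of the cell
  haveI : IsProbabilityMeasure (volume.restrict cellY) :=
    ⟨by rw [Measure.restrict_apply_univ, hcellY]; exact volume_cellY d N⟩
  have hCS : ∀ j, e j ^ 2 ≤ ∫ y in cellY, (e j + ∑ i, grad (v i) (y i) j) ^ 2 := by
    intro j
    have := sq_integral_le (volume.restrict cellY) (hGint j) (hGsqint j)
    rwa [hmean j] at this
  have hsum : ∑ j, e j ^ 2
      ≤ ∫ y in cellY, ∑ j, (e j + ∑ i, grad (v i) (y i) j) ^ 2 := by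
    rw [integral_finset_sum _ (fun j _ => hGsqint j)]
    exact Finset.sum_le_sum fun j _ => hCS j
  have hsumcont : Continuous fun y : Fin N → Fin d → ℝ =>
      ∑ j, (e j + ∑ i, grad (v i) (y i) j) ^ 2 :=
    continuous_finset_sum _ fun j _ => (hGcont j).pow 2
  have hwcont : Continuous fun y : Fin N → Fin d → ℝ => Real.exp (-V₁ x y / σ) := by
    have : Continuous fun y : Fin N → Fin d → ℝ => V₁ x y :=
      hV₁cont.comp (continuous_const.prodMk continuous_id)
    exact (this.neg.div_const σ).rexp
  have hwt : ∫ y in cellY, Real.exp (-S / σ) * ∑ j, (e j + ∑ i, grad (v i) (y i) j) ^ 2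
      ≤ ∫ y in cellY,
          (∑ j, (e j + ∑ i, grad (v i) (y i) j) ^ 2) * Real.exp (-V₁ x y / σ) := by
    refine setIntegral_mono_on
      ((continuous_const.mul hsumcont).continuousOn.integrableOn_compact hcellYc)
      ((hsumcont.mul hwcont).continuousOn.integrableOn_compact hcellYc)
      measurableSet_Icc ?_
    intro y _
    rw [mul_comm]
    refine mul_le_mul_of_nonneg_left ?_ (Finset.sum_nonneg fun j _ => sq_nonneg _)
    apply Real.exp_le_exp.2
    have h1 : -S ≤ -V₁ x y := by linarith [hS x y]
    exact (div_le_div_iff_of_pos_right hσ).2 h1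
  calc Real.exp (-S / σ) * ∑ j, e j ^ 2
      ≤ Real.exp (-S / σ) *
          ∫ y in cellY, ∑ j, (e j + ∑ i, grad (v i) (y i) j) ^ 2 :=
        mul_le_mul_of_nonneg_left hsum (Real.exp_nonneg _)
    _ = ∫ y in cellY,
          Real.exp (-S / σ) * ∑ j, (e j + ∑ i, grad (v i) (y i) j) ^ 2 := by
        rw [MeasureTheory.integral_const_mul]
    _ ≤ _ := hwt

end YLevel

section MEffBounds

variable {d N : ℕ}

/-- The zero corrector realizes the value `(∑ j, e j ^ 2) * ∫ exp(-V₁/σ)`. -/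
lemma zero_mem_A (σ : ℝ) (V₁ : (Fin d → ℝ) → (Fin N → Fin d → ℝ) → ℝ)
    (x e : Fin d → ℝ) :
    ((∑ j, e j ^ 2) * ∫ y in Set.Icc (0 : Fin N → Fin d → ℝ) 1,
        Real.exp (-V₁ x y / σ)) ∈
      { r : ℝ | ∃ v : Fin N → (Fin d → ℝ) → ℝ,
        (∀ i, ContDiff ℝ 1 (v i)) ∧ (∀ i, ZdPeriodic (v i)) ∧
        r = ∫ y in Set.Icc (0 : Fin N → Fin d → ℝ) 1,
              (∑ j, (e j + ∑ i, grad (v i) (y i) j) ^ 2) * Real.exp (-V₁ x y / σ) } := by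
  refine ⟨fun _ _ => 0, fun i => contDiff_const, fun i z k => by simp, ?_⟩
  have hgrad0 : ∀ (z : Fin d → ℝ) (j : Fin d),
      grad (fun _ : Fin d → ℝ => (0:ℝ)) z j = 0 := by
    intro z j
    simp [grad]
  have : ∀ y : Fin N → Fin d → ℝ,
      (∑ j, (e j + ∑ i, grad (fun _ : Fin d → ℝ => (0:ℝ)) (y i) j) ^ 2)
        = ∑ j, e j ^ 2 := by
    intro y
    refine Finset.sum_congr rfl fun j _ => ?_
    simp [hgrad0]
  rw [show (fun y : Fin N → Fin d → ℝ =>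
      (∑ j, (e j + ∑ i, grad (fun _ : Fin d → ℝ => (0:ℝ)) (y i) j) ^ 2) *
        Real.exp (-V₁ x y / σ))
    = fun y => (∑ j, e j ^ 2) * Real.exp (-V₁ x y / σ) from funext fun y => by
      rw [this y]]
  rw [MeasureTheory.integral_const_mul]

lemma A_bddBelow (σ : ℝ) (V₁ : (Fin d → ℝ) → (Fin N → Fin d → ℝ) → ℝ)
    (x e : Fin d → ℝ) :
    BddBelow { r : ℝ | ∃ v : Fin N → (Fin d → ℝ) → ℝ,
        (∀ i, ContDiff ℝ 1 (v i)) ∧ (∀ i, ZdPeriodic (v i)) ∧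
        r = ∫ y in Set.Icc (0 : Fin N → Fin d → ℝ) 1,
              (∑ j, (e j + ∑ i, grad (v i) (y i) j) ^ 2) * Real.exp (-V₁ x y / σ) } := by
  refine ⟨0, ?_⟩
  rintro r ⟨v, hv, hper, rfl⟩
  exact setIntegral_nonneg measurableSet_Icc fun y _ =>
    mul_nonneg (Finset.sum_nonneg fun j _ => sq_nonneg _) (Real.exp_nonneg _)

lemma mEff_le_sum_sq (σ : ℝ) (V₁ : (Fin d → ℝ) → (Fin N → Fin d → ℝ) → ℝ)
    (x e : Fin d → ℝ)
    (hWpos : 0 < ∫ y in Set.Icc (0 : Fin N → Fin d → ℝ) 1, Real.exp (-V₁ x y / σ)) :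
    mEff d N σ V₁ x e ≤ ∑ j, e j ^ 2 := by
  unfold mEff
  set W := ∫ y in Set.Icc (0 : Fin N → Fin d → ℝ) 1, Real.exp (-V₁ x y / σ) with hW
  have h1 := csInf_le (A_bddBelow σ V₁ x e) (zero_mem_A σ V₁ x e)
  calc W⁻¹ * sInf _ ≤ W⁻¹ * ((∑ j, e j ^ 2) * W) :=
        mul_le_mul_of_nonneg_left h1 (inv_nonneg.2 hWpos.le)
    _ = ∑ j, e j ^ 2 := by
        rw [mul_comm (∑ j, e j ^ 2) W, ← mul_assoc, inv_mul_cancel₀ hWpos.ne', one_mul]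

lemma W_bounds (σ : ℝ) (hσ : 0 < σ) (V₁ : (Fin d → ℝ) → (Fin N → Fin d → ℝ) → ℝ)
    (hV₁cont : Continuous fun p : (Fin d → ℝ) × (Fin N → Fin d → ℝ) => V₁ p.1 p.2)
    (s S : ℝ) (hs : ∀ x y, s ≤ V₁ x y) (hS : ∀ x y, V₁ x y ≤ S) (x : Fin d → ℝ) :
    Real.exp (-S / σ) ≤
        (∫ y in Set.Icc (0 : Fin N → Fin d → ℝ) 1, Real.exp (-V₁ x y / σ)) ∧
      (∫ y in Set.Icc (0 : Fin N → Fin d → ℝ) 1, Real.exp (-V₁ x y / σ))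
        ≤ Real.exp (-s / σ) := by
  have hwcont : Continuous fun y : Fin N → Fin d → ℝ => Real.exp (-V₁ x y / σ) := by
    have : Continuous fun y : Fin N → Fin d → ℝ => V₁ x y :=
      hV₁cont.comp (continuous_const.prodMk continuous_id)
    exact (this.neg.div_const σ).rexp
  have hwint : IntegrableOn (fun y : Fin N → Fin d → ℝ => Real.exp (-V₁ x y / σ))
      (Set.Icc 0 1) volume := hwcont.continuousOn.integrableOn_compact isCompact_Icc
  have hcint : ∀ c : ℝ, IntegrableOn (fun _ : Fin N → Fin d → ℝ => c)
      (Set.Icc 0 1) volume := fun c =>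
    integrableOn_const (by rw [volume_cellY]; exact ENNReal.one_ne_top)
  constructor
  · have := setIntegral_mono_on (hcint (Real.exp (-S / σ))) hwint measurableSet_Icc
      (fun y _ => Real.exp_le_exp.2 ((div_le_div_iff_of_pos_right hσ).2 (by linarith [hS x y])))
    rwa [setIntegral_const, measureReal_def, volume_cellY, ENNReal.toReal_one, one_smul] at this
  · have := setIntegral_mono_on hwint (hcint (Real.exp (-s / σ))) measurableSet_Icc
      (fun y _ => Real.exp_le_exp.2 ((div_le_div_iff_of_pos_right hσ).2 (by linarith [hs x y])))
    rwa [setIntegral_const, measureReal_def, volume_cellY, ENNReal.toReal_one, one_smul] at this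

lemma mEff_ge (σ : ℝ) (hσ : 0 < σ) (V₁ : (Fin d → ℝ) → (Fin N → Fin d → ℝ) → ℝ)
    (hV₁cont : Continuous fun p : (Fin d → ℝ) × (Fin N → Fin d → ℝ) => V₁ p.1 p.2)
    (s S : ℝ) (hs : ∀ x y, s ≤ V₁ x y) (hS : ∀ x y, V₁ x y ≤ S) (x e : Fin d → ℝ) :
    Real.exp (-(S - s) / σ) * ∑ j, e j ^ 2 ≤ mEff d N σ V₁ x e := by
  obtain ⟨hWlb, hWub⟩ := W_bounds σ hσ V₁ hV₁cont s S hs hS x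
  have hWpos : 0 < ∫ y in Set.Icc (0 : Fin N → Fin d → ℝ) 1, Real.exp (-V₁ x y / σ) :=
    lt_of_lt_of_le (Real.exp_pos _) hWlb
  unfold mEff
  have hinf : Real.exp (-S / σ) * ∑ j, e j ^ 2 ≤ sInf
      { r : ℝ | ∃ v : Fin N → (Fin d → ℝ) → ℝ,
        (∀ i, ContDiff ℝ 1 (v i)) ∧ (∀ i, ZdPeriodic (v i)) ∧
        r = ∫ y in Set.Icc (0 : Fin N → Fin d → ℝ) 1,
              (∑ j, (e j + ∑ i, grad (v i) (y i) j) ^ 2) * Real.exp (-V₁ x y / σ) } := by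
    refine le_csInf ⟨_, zero_mem_A σ V₁ x e⟩ ?_
    rintro r ⟨v, hv, hper, rfl⟩
    exact key_lb σ V₁ hσ hV₁cont S hS x e v hv hper
  have hinv : Real.exp (s / σ)
      ≤ (∫ y in Set.Icc (0 : Fin N → Fin d → ℝ) 1, Real.exp (-V₁ x y / σ))⁻¹ := by
    have h2 := one_div_le_one_div_of_le hWpos hWub
    rw [one_div, one_div] at h2
    have h3 : (Real.exp (-s / σ))⁻¹ = Real.exp (s / σ) := by
      rw [← Real.exp_neg, neg_div, neg_neg]
    rwa [h3] at h2
  calc Real.exp (-(S - s) / σ) * ∑ j, e j ^ 2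
      = Real.exp (s / σ) * (Real.exp (-S / σ) * ∑ j, e j ^ 2) := by
        rw [← mul_assoc, ← Real.exp_add]
        congr 2
        ring
    _ ≤ _ := by
        refine mul_le_mul hinv hinf ?_ (inv_nonneg.2 hWpos.le)
        exact mul_nonneg (Real.exp_nonneg _) (Finset.sum_nonneg fun j _ => sq_nonneg _)

end MEffBounds

section MEffMeasurable

variable {d N : ℕ}

lemma measurable_mEff_comp (σ : ℝ) (V₁ : (Fin d → ℝ) → (Fin N → Fin d → ℝ) → ℝ)
    (hV₁cont : Continuous fun p : (Fin d → ℝ) × (Fin N → Fin d → ℝ) => V₁ p.1 p.2)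
    (efun : (Fin d → ℝ) → Fin d → ℝ) (hecont : Continuous efun) :
    Measurable fun x => mEff d N σ V₁ x (efun x) := by
  simp only [mEff]
  have hWcont : Continuous fun x : Fin d → ℝ =>
      ∫ y in Set.Icc (0 : Fin N → Fin d → ℝ) 1, Real.exp (-V₁ x y / σ) := by
    refine continuous_parint (volume.restrict (Set.Icc 0 1)) isCompact_Icc
      (ae_restrict_mem measurableSet_Icc) _ ?_
    exact (hV₁cont.neg.div_const σ).rexp
  have hΦcont : ∀ v : Fin N → (Fin d → ℝ) → ℝ, (∀ i, ContDiff ℝ 1 (v i)) →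
      Continuous fun x => ∫ y in Set.Icc (0 : Fin N → Fin d → ℝ) 1,
        (∑ j, (efun x j + ∑ i, grad (v i) (y i) j) ^ 2) * Real.exp (-V₁ x y / σ) := by
    intro v hv
    refine continuous_parint (volume.restrict (Set.Icc 0 1)) isCompact_Icc
      (ae_restrict_mem measurableSet_Icc) _ ?_
    refine Continuous.mul ?_ (hV₁cont.neg.div_const σ).rexp
    refine continuous_finset_sum _ fun j _ => Continuous.pow ?_ 2
    refine Continuous.add ((continuous_apply j).comp (hecont.comp continuous_fst)) ?_
    exact (continuous_finset_sum _ fun i _ =>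
      (((hv i).continuous_fderiv one_ne_zero).clm_apply continuous_const).comp
        (continuous_apply i)).comp continuous_snd
  have hFusc : UpperSemicontinuous fun x =>
      sInf { r : ℝ | ∃ v : Fin N → (Fin d → ℝ) → ℝ,
        (∀ i, ContDiff ℝ 1 (v i)) ∧ (∀ i, ZdPeriodic (v i)) ∧
        r = ∫ y in Set.Icc (0 : Fin N → Fin d → ℝ) 1,
              (∑ j, (efun x j + ∑ i, grad (v i) (y i) j) ^ 2) *
                Real.exp (-V₁ x y / σ) } := by
    intro x₀ r hr
    obtain ⟨a, ha, halt⟩ := exists_lt_of_csInf_lt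
      ⟨_, zero_mem_A σ V₁ x₀ (efun x₀)⟩ hr
    obtain ⟨v, hv, hper, rfl⟩ := ha
    have hev : ∀ᶠ x in nhds x₀,
        (∫ y in Set.Icc (0 : Fin N → Fin d → ℝ) 1,
          (∑ j, (efun x j + ∑ i, grad (v i) (y i) j) ^ 2) *
            Real.exp (-V₁ x y / σ)) < r :=
      ((hΦcont v hv).continuousAt).eventually_lt continuousAt_const halt
    filter_upwards [hev] with x hx
    exact lt_of_le_of_lt (csInf_le (A_bddBelow σ V₁ x (efun x)) ⟨v, hv, hper, rfl⟩) hx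
  exact (hWcont.measurable.inv).mul hFusc.measurable

end MEffMeasurable

section VarExpand

lemma var_expand {d : ℕ} (p f : (Fin d → ℝ) → ℝ) (c : ℝ) (hp1 : ∫ x, p x = 1)
    (h1 : Integrable (fun x => f x * p x)) (h2 : Integrable (fun x => f x ^ 2 * p x))
    (hp : Integrable p) :
    ∫ x, (f x - c) ^ 2 * p x
      = (∫ x, f x ^ 2 * p x) - 2 * c * (∫ x, f x * p x) + c ^ 2 := by
  have hrw : (fun x => (f x - c) ^ 2 * p x)
      = fun x => (f x ^ 2 * p x - (2 * c) * (f x * p x)) + c ^ 2 * p x :=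
    funext fun x => by ring
  rw [hrw, integral_add (by exact h2.sub (h1.const_mul _)) (by exact hp.const_mul _),
    integral_sub h2 (by exact h1.const_mul _), MeasureTheory.integral_const_mul,
    MeasureTheory.integral_const_mul, hp1]
  ring

end VarExpand

/-- **Proposition 2.7, second part.** Poincaré inequality for the homogenized
Dirichlet form: `Var_{π⁰}(f) ≤ (σ/ρ) e^{3 osc(V₁)/σ} ∫ m(x,∇f(x)) π⁰(x) dx`. -/
theorem stmt9 (d N : ℕ) (hd : 1 ≤ d) (hN : 1 ≤ N) (σ ρ : ℝ) (hσ : 0 < σ) (hρ : 0 < ρ)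
    (V₀ : (Fin d → ℝ) → ℝ) (hV₀smooth : ContDiff ℝ (⊤ : ℕ∞) V₀)
    (hV₀int : Integrable (fun x => Real.exp (-V₀ x / σ)))
    (hV₀conf : Tendsto V₀ (cocompact (Fin d → ℝ)) atTop)
    (V₁ : (Fin d → ℝ) → (Fin N → Fin d → ℝ) → ℝ)
    (hV₁smooth : ContDiff ℝ (⊤ : ℕ∞) (fun p : (Fin d → ℝ) × (Fin N → Fin d → ℝ) => V₁ p.1 p.2))
    (hV₁bdd : ∃ C : ℝ, ∀ x y, |V₁ x y| ≤ C)
    (hV₁per : ∀ (x : Fin d → ℝ) (y : Fin N → Fin d → ℝ) (i : Fin N) (k : Fin d → ℤ),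
      V₁ x (Function.update y i (y i + fun j => (k j : ℝ))) = V₁ x y)
    (oscV₁ : ℝ)
    (hosc : oscV₁ = sSup (Set.range fun p : (Fin d → ℝ) × (Fin N → Fin d → ℝ) => V₁ p.1 p.2)
      - sInf (Set.range fun p : (Fin d → ℝ) × (Fin N → Fin d → ℝ) => V₁ p.1 p.2))
    (πref : (Fin d → ℝ) → ℝ)
    (hπref : ∀ x, πref x = Real.exp (-V₀ x / σ) / ∫ z, Real.exp (-V₀ z / σ))
    (Z : (Fin d → ℝ) → ℝ)
    (hZ : ∀ x, Z x = ∫ y in Set.Icc (0 : Fin N → Fin d → ℝ) 1,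
      Real.exp (-(V₀ x + V₁ x y) / σ))
    (π0 : (Fin d → ℝ) → ℝ) (hπ0 : ∀ x, π0 x = Z x / ∫ z, Z z)
    (hPoincare : ∀ f : (Fin d → ℝ) → ℝ, ContDiff ℝ (⊤ : ℕ∞) f → HasCompactSupport f →
      varDensity πref f ≤ (σ / ρ) * ∫ x, (∑ i, (grad f x i) ^ 2) * πref x) :
    ∀ f : (Fin d → ℝ) → ℝ, ContDiff ℝ (⊤ : ℕ∞) f → HasCompactSupport f →
      varDensity π0 f ≤
        (σ / ρ) * Real.exp (3 * oscV₁ / σ) * ∫ x, mEff d N σ V₁ x (grad f x) * π0 x := by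
  intro f hf hfc
  classical
  have hfcont : Continuous f := hf.continuous
  obtain ⟨C, hC⟩ := hV₁bdd
  set Rng := Set.range fun p : (Fin d → ℝ) × (Fin N → Fin d → ℝ) => V₁ p.1 p.2 with hRng
  have hbddA : BddAbove Rng := ⟨C, by rintro r ⟨p, rfl⟩; exact (abs_le.1 (hC p.1 p.2)).2⟩
  have hbddB : BddBelow Rng := ⟨-C, by rintro r ⟨p, rfl⟩; exact (abs_le.1 (hC p.1 p.2)).1⟩
  set S := sSup Rng with hSdef
  set s := sInf Rng with hsdef
  have hS : ∀ x y, V₁ x y ≤ S := fun x y => le_csSup hbddA ⟨(x, y), rfl⟩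
  have hs : ∀ x y, s ≤ V₁ x y := fun x y => csInf_le hbddB ⟨(x, y), rfl⟩
  have hosc' : oscV₁ = S - s := hosc
  have hosc_nn : 0 ≤ oscV₁ := by
    rw [hosc']
    linarith [hs 0 0, hS 0 0]
  have hV₁cont : Continuous fun p : (Fin d → ℝ) × (Fin N → Fin d → ℝ) => V₁ p.1 p.2 :=
    hV₁smooth.continuous
  -- the partition function of the fast variables
  set W : (Fin d → ℝ) → ℝ :=
    fun x => ∫ y in Set.Icc (0 : Fin N → Fin d → ℝ) 1, Real.exp (-V₁ x y / σ) with hWdef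
  have hWlb : ∀ x, Real.exp (-S / σ) ≤ W x := fun x =>
    (W_bounds σ hσ V₁ hV₁cont s S hs hS x).1
  have hWub : ∀ x, W x ≤ Real.exp (-s / σ) := fun x =>
    (W_bounds σ hσ V₁ hV₁cont s S hs hS x).2
  have hWpos : ∀ x, 0 < W x := fun x => lt_of_lt_of_le (Real.exp_pos _) (hWlb x)
  have hWcont : Continuous W := by
    rw [hWdef]
    exact continuous_parint (volume.restrict (Set.Icc 0 1)) isCompact_Icc
      (ae_restrict_mem measurableSet_Icc) _ ((hV₁cont.neg.div_const σ).rexp)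
  set E₀ : (Fin d → ℝ) → ℝ := fun x => Real.exp (-V₀ x / σ) with hE₀def
  have hE₀pos : ∀ x, 0 < E₀ x := fun x => Real.exp_pos _
  have hE₀cont : Continuous E₀ := (hV₀smooth.continuous.neg.div_const σ).rexp
  have hE₀int : Integrable E₀ := hV₀int
  set I₀ : ℝ := ∫ x, E₀ x with hI₀def
  have hI₀pos : 0 < I₀ := by
    rw [hI₀def, integral_pos_iff_support_of_nonneg (fun x => (hE₀pos x).le) hE₀int]
    have hsupp : Function.support E₀ = Set.univ :=
      Set.eq_univ_of_forall fun x => (hE₀pos x).ne'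
    rw [hsupp]
    exact isOpen_univ.measure_pos volume ⟨0, trivial⟩
  have hZE : ∀ x, Z x = E₀ x * W x := by
    intro x
    rw [hZ x, hWdef, ← MeasureTheory.integral_const_mul]
    refine setIntegral_congr_fun measurableSet_Icc fun y _ => ?_
    rw [show -(V₀ x + V₁ x y) / σ = -V₀ x / σ + -V₁ x y / σ by ring, Real.exp_add]
  have hZeq : Z = fun x => E₀ x * W x := funext hZE
  have hZcont : Continuous Z := by rw [hZeq]; exact hE₀cont.mul hWcont
  have hZpos : ∀ x, 0 < Z x := fun x => by
    rw [hZE x]; exact mul_pos (hE₀pos x) (hWpos x)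
  have hZub : ∀ x, Z x ≤ Real.exp (-s / σ) * E₀ x := fun x => by
    rw [hZE x, mul_comm]
    exact mul_le_mul_of_nonneg_right (hWub x) (hE₀pos x).le
  have hZlb : ∀ x, Real.exp (-S / σ) * E₀ x ≤ Z x := fun x => by
    rw [hZE x, mul_comm (E₀ x) (W x)]
    exact mul_le_mul_of_nonneg_right (hWlb x) (hE₀pos x).le
  have hZint : Integrable Z := by
    refine Integrable.mono' (hE₀int.const_mul (Real.exp (-s / σ)))
      hZcont.aestronglyMeasurable (ae_of_all _ fun x => ?_)
    rw [Real.norm_eq_abs, abs_of_nonneg (hZpos x).le]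
    exact hZub x
  set IZ : ℝ := ∫ x, Z x with hIZdef
  have hIZlb : Real.exp (-S / σ) * I₀ ≤ IZ := by
    rw [hIZdef, hI₀def, ← MeasureTheory.integral_const_mul]
    exact integral_mono (hE₀int.const_mul _) hZint hZlb
  have hIZub : IZ ≤ Real.exp (-s / σ) * I₀ := by
    rw [hIZdef, hI₀def, ← MeasureTheory.integral_const_mul]
    exact integral_mono hZint (hE₀int.const_mul _) hZub
  have hIZpos : 0 < IZ := lt_of_lt_of_le (mul_pos (Real.exp_pos _) hI₀pos) hIZlb
  have hπ0eq : π0 = fun x => Z x / IZ := funext fun x => by rw [hπ0 x]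
  have hπrefeq : πref = fun x => E₀ x / I₀ := funext fun x => by rw [hπref x]
  have hπ0cont : Continuous π0 := by rw [hπ0eq]; exact hZcont.div_const IZ
  have hπrefcont : Continuous πref := by rw [hπrefeq]; exact hE₀cont.div_const I₀
  have hπ0int : Integrable π0 := by rw [hπ0eq]; exact hZint.div_const IZ
  have hπrefint : Integrable πref := by rw [hπrefeq]; exact hE₀int.div_const I₀
  have hπ0nn : ∀ x, 0 ≤ π0 x := fun x => by
    rw [hπ0 x]; exact div_nonneg (hZpos x).le hIZpos.le
  have hπrefnn : ∀ x, 0 ≤ πref x := fun x => by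
    rw [hπref x]; exact div_nonneg (hE₀pos x).le hI₀pos.le
  have hπ0one : ∫ x, π0 x = 1 := by
    rw [hπ0eq, MeasureTheory.integral_div, ← hIZdef, div_self hIZpos.ne']
  have hπrefone : ∫ x, πref x = 1 := by
    rw [hπrefeq, MeasureTheory.integral_div, ← hI₀def, div_self hI₀pos.ne']
  -- pointwise comparison of the two densities
  have hcomp1 : ∀ x, π0 x ≤ Real.exp (oscV₁ / σ) * πref x := by
    intro x
    rw [hπ0 x, hπref x]
    have h1 : Z x / IZ ≤ Real.exp (-s / σ) * E₀ x / (Real.exp (-S / σ) * I₀) :=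
      div_le_div₀ (mul_nonneg (Real.exp_nonneg _) (hE₀pos x).le) (hZub x)
        (mul_pos (Real.exp_pos _) hI₀pos) hIZlb
    refine h1.trans (le_of_eq ?_)
    rw [hosc']
    rw [show Real.exp (-s / σ) * E₀ x / (Real.exp (-S / σ) * I₀)
        = Real.exp (-s / σ) / Real.exp (-S / σ) * (E₀ x / I₀) by ring, ← Real.exp_sub]
    rw [show -s / σ - -S / σ = (S - s) / σ by ring]
  have hcomp2 : ∀ x, πref x ≤ Real.exp (oscV₁ / σ) * π0 x := by
    intro x
    rw [hπ0 x, hπref x]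
    have h1 : Real.exp (-S / σ) * E₀ x / (Real.exp (-s / σ) * I₀) ≤ Z x / IZ :=
      div_le_div₀ (hZpos x).le (hZlb x) hIZpos hIZub
    have h2 : Real.exp (oscV₁ / σ) * (Real.exp (-S / σ) * E₀ x / (Real.exp (-s / σ) * I₀))
        = E₀ x / I₀ := by
      rw [hosc']
      rw [show Real.exp ((S - s) / σ) * (Real.exp (-S / σ) * E₀ x / (Real.exp (-s / σ) * I₀))
          = Real.exp ((S - s) / σ) * Real.exp (-S / σ) / Real.exp (-s / σ) * (E₀ x / I₀)
          by ring]
      rw [← Real.exp_add, show (S - s) / σ + -S / σ = -s / σ by ring,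
        div_self (Real.exp_ne_zero _), one_mul]
    calc E₀ x / I₀ = Real.exp (oscV₁ / σ)
          * (Real.exp (-S / σ) * E₀ x / (Real.exp (-s / σ) * I₀)) := h2.symm
      _ ≤ Real.exp (oscV₁ / σ) * (Z x / IZ) :=
          mul_le_mul_of_nonneg_left h1 (Real.exp_nonneg _)
  -- boundedness of f and its gradient
  obtain ⟨Mf, hMf⟩ := hfc.exists_bound_of_continuous hfcont
  have hgradcont : ∀ i, Continuous fun x => grad f x i := fun i =>
    (hf.continuous_fderiv (by simp)).clm_apply continuous_const
  have hgradcont2 : Continuous fun x => ∑ i, grad f x i ^ 2 :=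
    continuous_finset_sum _ fun i _ => (hgradcont i).pow 2
  have hgradsupp : HasCompactSupport fun x => ∑ i, grad f x i ^ 2 := by
    have h1 : HasCompactSupport (fderiv ℝ f) := hfc.fderiv ℝ
    have h2 : (fun x => ∑ i, grad f x i ^ 2)
        = (fun L : (Fin d → ℝ) →L[ℝ] ℝ => ∑ i, L (Pi.single i 1) ^ 2) ∘ fderiv ℝ f := rfl
    rw [h2]
    exact h1.comp_left (by simp)
  obtain ⟨Mg, hMg⟩ := hgradsupp.exists_bound_of_continuous hgradcont2
  -- integrability of bounded continuous functions against the densities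
  have hbm : ∀ g : (Fin d → ℝ) → ℝ, Continuous g → (∃ M, ∀ x, ‖g x‖ ≤ M) →
      ∀ p : (Fin d → ℝ) → ℝ, Integrable p → Integrable fun x => g x * p x :=
    fun g hg hgb p hp => by
      obtain ⟨M, hM⟩ := hgb
      exact hp.bdd_mul hg.aestronglyMeasurable (ae_of_all _ hM)
  set c : ℝ := ∫ x, f x * πref x with hcdef
  have hfbd : ∃ M, ∀ x, ‖f x‖ ≤ M := ⟨Mf, hMf⟩
  have hf2bd : ∃ M, ∀ x, ‖f x ^ 2‖ ≤ M := ⟨Mf ^ 2, fun x => by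
    rw [norm_pow]
    exact pow_le_pow_left₀ (norm_nonneg _) (hMf x) 2⟩
  have hfcbd : ∃ M, ∀ x, ‖(f x - c) ^ 2‖ ≤ M := by
    refine ⟨(Mf + |c|) ^ 2, fun x => ?_⟩
    rw [norm_pow]
    refine pow_le_pow_left₀ (norm_nonneg _) ?_ 2
    calc ‖f x - c‖ ≤ ‖f x‖ + ‖c‖ := norm_sub_le _ _
      _ ≤ Mf + |c| := add_le_add (hMf x) (le_of_eq (Real.norm_eq_abs c))
  have If_pref : Integrable fun x => f x * πref x := hbm f hfcont hfbd πref hπrefint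
  have If2_pref : Integrable fun x => f x ^ 2 * πref x :=
    hbm _ (hfcont.pow 2) hf2bd πref hπrefint
  have Ifc_pref : Integrable fun x => (f x - c) ^ 2 * πref x :=
    hbm _ ((hfcont.sub continuous_const).pow 2) hfcbd πref hπrefint
  have Ig_pref : Integrable fun x => (∑ i, grad f x i ^ 2) * πref x :=
    hbm _ hgradcont2 ⟨Mg, hMg⟩ πref hπrefint
  have If_p0 : Integrable fun x => f x * π0 x := hbm f hfcont hfbd π0 hπ0int
  have If2_p0 : Integrable fun x => f x ^ 2 * π0 x :=
    hbm _ (hfcont.pow 2) hf2bd π0 hπ0int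
  have Ifc_p0 : Integrable fun x => (f x - c) ^ 2 * π0 x :=
    hbm _ ((hfcont.sub continuous_const).pow 2) hfcbd π0 hπ0int
  have Ig_p0 : Integrable fun x => (∑ i, grad f x i ^ 2) * π0 x :=
    hbm _ hgradcont2 ⟨Mg, hMg⟩ π0 hπ0int
  -- variance comparison
  have h_var0 : varDensity π0 f ≤ ∫ x, (f x - c) ^ 2 * π0 x := by
    rw [varDensity, var_expand π0 f c hπ0one If_p0 If2_p0 hπ0int]
    nlinarith [sq_nonneg ((∫ x, f x * π0 x) - c)]
  have h_eq : ∫ x, (f x - c) ^ 2 * πref x = varDensity πref f := by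
    rw [varDensity, var_expand πref f c hπrefone If_pref If2_pref hπrefint, ← hcdef]
    ring
  have h_mono1 : ∫ x, (f x - c) ^ 2 * π0 x
      ≤ Real.exp (oscV₁ / σ) * ∫ x, (f x - c) ^ 2 * πref x := by
    rw [← MeasureTheory.integral_const_mul]
    refine integral_mono Ifc_p0 (by exact Ifc_pref.const_mul _) fun x => ?_
    calc (f x - c) ^ 2 * π0 x
        ≤ (f x - c) ^ 2 * (Real.exp (oscV₁ / σ) * πref x) :=
          mul_le_mul_of_nonneg_left (hcomp1 x) (sq_nonneg _)
      _ = Real.exp (oscV₁ / σ) * ((f x - c) ^ 2 * πref x) := by ring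
  have h_poincare := hPoincare f hf hfc
  have h_mono2 : ∫ x, (∑ i, grad f x i ^ 2) * πref x
      ≤ Real.exp (oscV₁ / σ) * ∫ x, (∑ i, grad f x i ^ 2) * π0 x := by
    rw [← MeasureTheory.integral_const_mul]
    refine integral_mono Ig_pref (by exact Ig_p0.const_mul _) fun x => ?_
    calc (∑ i, grad f x i ^ 2) * πref x
        ≤ (∑ i, grad f x i ^ 2) * (Real.exp (oscV₁ / σ) * π0 x) :=
          mul_le_mul_of_nonneg_left (hcomp2 x)
            (Finset.sum_nonneg fun i _ => sq_nonneg _)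
      _ = Real.exp (oscV₁ / σ) * ((∑ i, grad f x i ^ 2) * π0 x) := by ring
  -- from the gradient to the effective diffusion form
  have hgradc : Continuous fun x => grad f x := continuous_pi hgradcont
  have hmeas : Measurable fun x => mEff d N σ V₁ x (grad f x) :=
    measurable_mEff_comp σ V₁ hV₁cont _ hgradc
  have hmeff_nn : ∀ x, 0 ≤ mEff d N σ V₁ x (grad f x) := fun x =>
    le_trans (by positivity) (mEff_ge σ hσ V₁ hV₁cont s S hs hS x (grad f x))
  have hmeff_le : ∀ x, mEff d N σ V₁ x (grad f x) ≤ ∑ i, grad f x i ^ 2 := fun x =>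
    mEff_le_sum_sq σ V₁ x _
      (lt_of_lt_of_le (Real.exp_pos _) (W_bounds σ hσ V₁ hV₁cont s S hs hS x).1)
  have hInt_m : Integrable fun x => mEff d N σ V₁ x (grad f x) * π0 x := by
    refine Integrable.mono' (hbm _ hgradcont2 ⟨Mg, hMg⟩ π0 hπ0int)
      ((hmeas.mul hπ0cont.measurable).aestronglyMeasurable) (ae_of_all _ fun x => ?_)
    rw [Real.norm_eq_abs, abs_of_nonneg (mul_nonneg (hmeff_nn x) (hπ0nn x))]
    exact mul_le_mul_of_nonneg_right (hmeff_le x) (hπ0nn x)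
  have h_meff : ∫ x, (∑ i, grad f x i ^ 2) * π0 x
      ≤ Real.exp (oscV₁ / σ) * ∫ x, mEff d N σ V₁ x (grad f x) * π0 x := by
    rw [← MeasureTheory.integral_const_mul]
    refine integral_mono Ig_p0 (by exact hInt_m.const_mul _) fun x => ?_
    have h1 : ∑ i, grad f x i ^ 2
        ≤ Real.exp (oscV₁ / σ) * mEff d N σ V₁ x (grad f x) := by
      have h2 := mEff_ge σ hσ V₁ hV₁cont s S hs hS x (grad f x)
      have h3 := mul_le_mul_of_nonneg_left h2 (Real.exp_nonneg (oscV₁ / σ))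
      rw [hosc'] at h3 ⊢
      rw [← mul_assoc, ← Real.exp_add,
        show (S - s) / σ + -(S - s) / σ = 0 by ring, Real.exp_zero, one_mul] at h3
      exact h3
    calc (∑ i, grad f x i ^ 2) * π0 x
        ≤ Real.exp (oscV₁ / σ) * mEff d N σ V₁ x (grad f x) * π0 x :=
          mul_le_mul_of_nonneg_right h1 (hπ0nn x)
      _ = Real.exp (oscV₁ / σ) * (mEff d N σ V₁ x (grad f x) * π0 x) := by ring
  -- assemble
  have hσρ : 0 ≤ σ / ρ := (div_pos hσ hρ).le
  have he1 : 0 ≤ Real.exp (oscV₁ / σ) := Real.exp_nonneg _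
  calc varDensity π0 f
      ≤ ∫ x, (f x - c) ^ 2 * π0 x := h_var0
    _ ≤ Real.exp (oscV₁ / σ) * ∫ x, (f x - c) ^ 2 * πref x := h_mono1
    _ = Real.exp (oscV₁ / σ) * varDensity πref f := by rw [h_eq]
    _ ≤ Real.exp (oscV₁ / σ)
          * ((σ / ρ) * ∫ x, (∑ i, grad f x i ^ 2) * πref x) :=
        mul_le_mul_of_nonneg_left h_poincare he1
    _ ≤ Real.exp (oscV₁ / σ) * ((σ / ρ)
          * (Real.exp (oscV₁ / σ) * ∫ x, (∑ i, grad f x i ^ 2) * π0 x)) :=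
        mul_le_mul_of_nonneg_left (mul_le_mul_of_nonneg_left h_mono2 hσρ) he1
    _ ≤ Real.exp (oscV₁ / σ) * ((σ / ρ) * (Real.exp (oscV₁ / σ)
          * (Real.exp (oscV₁ / σ) * ∫ x, mEff d N σ V₁ x (grad f x) * π0 x))) :=
        mul_le_mul_of_nonneg_left (mul_le_mul_of_nonneg_left
          (mul_le_mul_of_nonneg_left h_meff he1) hσρ) he1
    _ = σ / ρ * Real.exp (3 * oscV₁ / σ) * ∫ x, mEff d N σ V₁ x (grad f x) * π0 x := by
        rw [show (3 : ℝ) * oscV₁ / σ = oscV₁ / σ + (oscV₁ / σ + oscV₁ / σ) by ring,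
          Real.exp_add, Real.exp_add]
        ring
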